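/- Let (𝔙, 𝔙⁺) be a non-degenerate ordered 𝔉-bimodule such that 𝔙⁺ is proper and Archimedean. If 𝔲, 𝔳 ∈ 𝔙⁺ with 𝔲 ≤ 𝔳 (i.e. 𝔳 − 𝔲 ∈ 𝔙⁺), then the order of 𝔲 is at most the order of 𝔳. -/

import Mathlib

noncomputable section

open scoped Matrix.Norms.L2Operator

/-! ### The *-algebra 𝔉 of ∞×∞ complex matrices with finitely many nonzero entries -/

/-- `∞ × ∞` complex matrices (indexed by `ℕ × ℕ`). -/
abbrev FMat := ℕ → ℕ → ℂ

/-- The matrix has (at most) finitely many nonzero entries: it is supported in some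
`n × n` top-left block. -/
def IsFin (a : FMat) : Prop := ∃ n, ∀ i j, (n ≤ i ∨ n ≤ j) → a i j = 0

/-- Matrix multiplication in `𝔉` (the `tsum` is a finite sum for finitely supported
matrices). -/
def fmul (a b : FMat) : FMat := fun i k => ∑' j, a i j * b j k

/-- The involution (conjugate transpose) on `𝔉`. -/
def fstar (a : FMat) : FMat := fun i j => starRingEnd ℂ (a j i)

/-- The matrix unit `𝔢_{i,j}`. -/
def eUnit (i j : ℕ) : FMat := fun k l => if k = i ∧ l = j then 1 else 0

/-- `𝔍ₙ = Σ_{i<n} 𝔢_{i,i}`, the partial identities. -/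
def JMat (n : ℕ) : FMat := fun k l => if k = l ∧ k < n then 1 else 0

/-- `𝔎ₙ = Σ_{i<n} 𝔢_{i,n+i}`, used for `2×2`-block constructions. -/
def KMat (n : ℕ) : FMat := fun k l => if l = k + n ∧ k < n then 1 else 0

/-- The diagonal idempotent `Σ_{i ∈ s} 𝔢_{i,i}` associated to a finite set `s ⊂ ℕ`. -/
def finsetDiag (s : Finset ℕ) : FMat := fun k l => if k = l ∧ k ∈ s then 1 else 0

/-- The operator norm on `𝔉`: the supremum of the (C*-algebra) operator norms of the
finite top-left blocks (for a finitely supported matrix the blocks stabilize). -/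
def fnorm (a : FMat) : ℝ :=
  ⨆ n : ℕ, ‖(Matrix.of fun i j : Fin n => a i j : Matrix (Fin n) (Fin n) ℂ)‖

/-- The order `o(𝔞)` of a finitely supported matrix: the least `n` such that `𝔞` is
supported in the top-left `n × n` block. -/
def matOrd (a : FMat) : ℕ := sInf {n | ∀ i j, (n ≤ i ∨ n ≤ j) → a i j = 0}

/-- A local unitary in `𝔉`: `𝔞*𝔞 = 𝔍_{o(𝔞)} = 𝔞𝔞*`. -/
def IsLocalUnitary (a : FMat) : Prop :=
  IsFin a ∧ fmul (fstar a) a = JMat (matOrd a) ∧ fmul a (fstar a) = JMat (matOrd a)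

/-! ### Non-degenerate *-𝔉-bimodules -/

/-- A non-degenerate `*`-`𝔉`-bimodule structure on a complex vector space `V`:
left and right actions of (finitely supported) infinite matrices together with an
involution, compatible with each other and with the complex scalars, such that every
element is `𝔍ₙ·v·𝔍ₙ` for some `n`. -/
structure FBimod (V : Type*) [AddCommGroup V] [Module ℂ V] where
  lsmul : FMat → V → V
  rsmul : V → FMat → V
  star : V → V
  lsmul_add : ∀ a u v, lsmul a (u + v) = lsmul a u + lsmul a v
  rsmul_add : ∀ u v b, rsmul (u + v) b = rsmul u b + rsmul v b
  add_lsmul : ∀ a b v, IsFin a → IsFin b → lsmul (a + b) v = lsmul a v + lsmul b v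
  rsmul_add' : ∀ v a b, IsFin a → IsFin b → rsmul v (a + b) = rsmul v a + rsmul v b
  smul_lsmul : ∀ (c : ℂ) a v, IsFin a → lsmul (c • a) v = c • lsmul a v
  smul_rsmul : ∀ (c : ℂ) v a, IsFin a → rsmul v (c • a) = c • rsmul v a
  mul_lsmul : ∀ a b v, IsFin a → IsFin b → lsmul (fmul a b) v = lsmul a (lsmul b v)
  rsmul_mul : ∀ v a b, IsFin a → IsFin b → rsmul v (fmul a b) = rsmul (rsmul v a) b
  lsmul_rsmul : ∀ a v b, IsFin a → IsFin b → rsmul (lsmul a v) b = lsmul a (rsmul v b)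
  star_add : ∀ u v, star (u + v) = star u + star v
  star_star : ∀ v, star (star v) = v
  star_lsmul : ∀ a v, IsFin a → star (lsmul a v) = rsmul (star v) (fstar a)
  star_rsmul : ∀ v a, IsFin a → star (rsmul v a) = lsmul (fstar a) (star v)
  smul_compat : ∀ (c : ℂ) (n : ℕ) v, lsmul (JMat n) (rsmul v (JMat n)) = v →
    lsmul (c • JMat n) v = c • v
  nondeg : ∀ v, ∃ n, lsmul (JMat n) (rsmul v (JMat n)) = v

namespace FBimod

variable {V : Type*} [AddCommGroup V] [Module ℂ V] (M : FBimod V)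

/-- `𝔍ₙ 𝔳 𝔍ₙ`. -/
def cut (n : ℕ) (v : V) : V := M.lsmul (JMat n) (M.rsmul v (JMat n))

/-- The order `o(𝔳)`: the smallest `n` with `𝔍ₙ 𝔳 𝔍ₙ = 𝔳`. -/
def ord (v : V) : ℕ := sInf {n | M.cut n v = v}

/-- `𝔞* 𝔳 𝔞`. -/
def conj (a : FMat) (v : V) : V := M.lsmul (fstar a) (M.rsmul v a)

/-- `C` is a bimodule cone: consists of self-adjoint elements, is closed under
addition and under `𝔳 ↦ 𝔞*𝔳𝔞` for `𝔞 ∈ 𝔉`. -/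
def IsCone (C : Set V) : Prop :=
  (∀ v ∈ C, M.star v = v) ∧ (∀ u ∈ C, ∀ v ∈ C, u + v ∈ C) ∧
    (∀ v ∈ C, ∀ a : FMat, IsFin a → M.conj a v ∈ C)

/-- The cone `C` is proper: `C ∩ (−C) = {0}`. -/
def ConeProper (C : Set V) : Prop := ∀ v ∈ C, -v ∈ C → v = 0

/-- The cone `C` is Archimedean. -/
def ConeArch (C : Set V) : Prop :=
  ∀ u ∈ C, ∀ v : V, M.star v = v → (∀ k : ℝ, 0 < k → (k : ℂ) • u + v ∈ C) → v ∈ C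

/-- The cone `C` is generating. -/
def ConeGen (C : Set V) : Prop :=
  ∀ v : V, ∃ v₀ ∈ C, ∃ v₁ ∈ C, ∃ v₂ ∈ C, ∃ v₃ ∈ C,
    v = v₀ + Complex.I • v₁ - v₂ - Complex.I • v₃

/-- `(𝔳₁, 𝔳₂)ₙ⁺ = 𝔳₁ + 𝔎ₙ* 𝔳₂ 𝔎ₙ` (the diagonal `2×2`-block `diag(𝔳₁,𝔳₂)`). -/
def pairPlus (n : ℕ) (v₁ v₂ : V) : V :=
  v₁ + M.lsmul (fstar (KMat n)) (M.rsmul v₂ (KMat n))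

/-- `saₙ(𝔳) = 𝔍ₙ 𝔳 𝔎ₙ + 𝔎ₙ* 𝔳* 𝔍ₙ` (the off-diagonal `2×2`-block of `𝔳`). -/
def san (n : ℕ) (v : V) : V :=
  M.lsmul (JMat n) (M.rsmul v (KMat n)) +
    M.lsmul (fstar (KMat n)) (M.rsmul (M.star v) (JMat n))

/-- `𝔲` and `𝔳` are `𝔉`-independent: compressed onto disjoint diagonal blocks. -/
def FIndep (u v : V) : Prop :=
  ∃ I J : Finset ℕ, Disjoint I J ∧
    M.lsmul (finsetDiag I) (M.rsmul u (finsetDiag I)) = u ∧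
    M.lsmul (finsetDiag J) (M.rsmul v (finsetDiag J)) = v

/-- `(𝔙, C, abs)` is a non-degenerate absolutely ordered `𝔉`-bimodule
(Definition 18 of the paper). -/
structure IsAbsOrd (C : Set V) (abs : V → V) : Prop where
  cone : M.IsCone C
  abs_mem : ∀ v, abs v ∈ C
  ord_abs_le : ∀ v, M.ord (abs v) ≤ M.ord v
  abs_of_mem : ∀ v ∈ C, abs v = v
  pos_part : ∀ v, M.pairPlus (M.ord v) (abs (M.star v)) (abs v) + M.san (M.ord v) v ∈ C
  abs_smul_le : ∀ (a b : FMat), IsFin a → IsFin b → ∀ v,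
    (fnorm a : ℂ) • abs (M.rsmul (abs v) b) - abs (M.lsmul a (M.rsmul v b)) ∈ C
  indep_add : ∀ u v, M.FIndep u v → abs (u + v) = abs u + abs v
  absorb : ∀ u ∈ C, ∀ v ∈ C, ∀ w ∈ C, abs (u - v) = u + v → v - w ∈ C →
    abs (u - w) = u + w
  ortho_pm : ∀ u ∈ C, ∀ v ∈ C, ∀ w ∈ C, abs (u - v) = u + v → abs (u - w) = u + w →
    abs (u - abs (v + w)) = u + abs (v + w) ∧ abs (u - abs (v - w)) = u + abs (v - w)

/-- `eⁿ = Σ_{i<n} 𝔢_{i,0} 𝔢 𝔢_{0,i}` for an element `𝔢` of order `1`. -/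
def epow (e : V) (n : ℕ) : V :=
  ∑ i ∈ Finset.range n, M.lsmul (eUnit i 0) (M.rsmul e (eUnit 0 i))

/-- `𝔢` is a local order unit for `(𝔙, C)`. -/
def IsLocalOrderUnit (C : Set V) (e : V) : Prop :=
  e ∈ C ∧ M.cut 1 e = e ∧ ∀ v : V, M.cut 1 v = v → ∃ k : ℝ, 0 < k ∧
    M.pairPlus 1 ((k : ℂ) • e) ((k : ℂ) • e) + M.san 1 v ∈ C

/-- `(𝔙, C, 𝔢)` is a local `𝔉`-order unit bimodule. -/
def IsLocalUnitBimod (C : Set V) (e : V) : Prop :=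
  M.IsCone C ∧ ConeProper C ∧ M.ConeArch C ∧ M.IsLocalOrderUnit C e

/-- The norm associated to a local order unit:
`‖𝔳‖ = inf { k > 0 : (k𝔢^{o(𝔳)}, k𝔢^{o(𝔳)})⁺_{o(𝔳)} + sa_{o(𝔳)}(𝔳) ∈ C }`. -/
def lnorm (C : Set V) (e : V) (v : V) : ℝ :=
  sInf {k : ℝ | 0 < k ∧
    M.pairPlus (M.ord v) ((k : ℂ) • M.epow e (M.ord v)) ((k : ℂ) • M.epow e (M.ord v)) +
      M.san (M.ord v) v ∈ C}

/-- `𝔲 ⊥_∞ 𝔳` with respect to the local-order-unit norm. -/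
def PerpInf (C : Set V) (e : V) (u v : V) : Prop :=
  ∀ k₁ k₂ : ℝ, M.lnorm C e ((k₁ : ℂ) • u + (k₂ : ℂ) • v) =
    max (M.lnorm C e ((k₁ : ℂ) • u)) (M.lnorm C e ((k₂ : ℂ) • v))

end FBimod
/-! ### Matrices over a complex *-vector space -/

section MatrixLevel

variable {V : Type*} [AddCommGroup V] [Module ℂ V] [StarAddMonoid V] [StarModule ℂ V]

/-- Conjugate transpose of a rectangular matrix over a `*`-vector space. -/
def mstar {m n : ℕ} (v : Matrix (Fin m) (Fin n) V) : Matrix (Fin n) (Fin m) V :=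
  fun i j => star (v j i)

/-- Left action of a scalar matrix: `(a v)_{ij} = Σ_k a_{ik} v_{kj}`. -/
def aSmul {r m n : ℕ} (a : Matrix (Fin r) (Fin m) ℂ) (v : Matrix (Fin m) (Fin n) V) :
    Matrix (Fin r) (Fin n) V :=
  fun i j => ∑ k, a i k • v k j

/-- Right action of a scalar matrix: `(v b)_{ij} = Σ_k b_{kj} • v_{ik}`. -/
def smulB {m n s : ℕ} (v : Matrix (Fin m) (Fin n) V) (b : Matrix (Fin n) (Fin s) ℂ) :
    Matrix (Fin m) (Fin s) V :=
  fun i j => ∑ k, b k j • v i k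

/-- Direct sum (block diagonal) of rectangular matrices over `V`. -/
def dsum {m n r s : ℕ} (v : Matrix (Fin m) (Fin n) V) (w : Matrix (Fin r) (Fin s) V) :
    Matrix (Fin (m + r)) (Fin (n + s)) V :=
  fun i j =>
    if hi : (i : ℕ) < m then
      (if hj : (j : ℕ) < n then v ⟨i, hi⟩ ⟨j, hj⟩ else 0)
    else
      (if hj : (j : ℕ) < n then 0
       else w ⟨(i : ℕ) - m, by have := i.isLt; omega⟩ ⟨(j : ℕ) - n, by have := j.isLt; omega⟩)

end MatrixLevel

/-- The L2-operator norm of a rectangular complex scalar matrix. -/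
def cnorm {r m : ℕ} (a : Matrix (Fin r) (Fin m) ℂ) : ℝ := ‖a‖

/-- Embedding of a finite rectangular complex matrix into `𝔉`. -/
def embC {r m : ℕ} (a : Matrix (Fin r) (Fin m) ℂ) : FMat :=
  fun i j => if hi : i < r then (if hj : j < m then a ⟨i, hi⟩ ⟨j, hj⟩ else 0) else 0

/-- `e ⊕ ⋯ ⊕ e`: the diagonal matrix with constant diagonal `e`. -/
def diagE {V : Type*} [AddCommGroup V] (e : V) (n : ℕ) : Matrix (Fin n) (Fin n) V :=
  Matrix.of fun i j => if i = j then e else 0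

/-! ### Absolutely matrix ordered spaces and absolute matrix order unit spaces -/

/-- An absolutely matrix ordered space structure on a complex `*`-vector space `V`:
matrix cones `Mₙ(V)⁺` and absolute values `|·|_{m,n} : M_{m,n}(V) → Mₙ(V)⁺`
(Definition 4.1 of Karn-Kumar). -/
structure AMOS (V : Type*) [AddCommGroup V] [Module ℂ V] [StarAddMonoid V]
    [StarModule ℂ V] where
  pos : ∀ n : ℕ, Set (Matrix (Fin n) (Fin n) V)
  abs : ∀ m n : ℕ, Matrix (Fin m) (Fin n) V → Matrix (Fin n) (Fin n) V
  pos_star : ∀ n, ∀ v ∈ pos n, mstar v = v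
  pos_add : ∀ n, ∀ u ∈ pos n, ∀ v ∈ pos n, u + v ∈ pos n
  pos_conj : ∀ m n (a : Matrix (Fin n) (Fin m) ℂ), ∀ v ∈ pos n,
    aSmul a.conjTranspose (smulB v a) ∈ pos m
  abs_mem : ∀ m n v, abs m n v ∈ pos n
  abs_of_pos : ∀ n, ∀ v ∈ pos n, abs n n v = v
  abs_add_self : ∀ n (v : Matrix (Fin n) (Fin n) V), mstar v = v →
    abs n n v + v ∈ pos n ∧ abs n n v - v ∈ pos n
  abs_real_smul : ∀ n (k : ℝ) (v : Matrix (Fin n) (Fin n) V), mstar v = v →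
    abs n n ((k : ℂ) • v) = ((|k| : ℝ) : ℂ) • abs n n v
  absorb : ∀ n, ∀ u ∈ pos n, ∀ v ∈ pos n, ∀ w ∈ pos n,
    abs n n (u - v) = u + v → v - w ∈ pos n → abs n n (u - w) = u + w
  ortho_pm : ∀ n, ∀ u ∈ pos n, ∀ v ∈ pos n, ∀ w ∈ pos n,
    abs n n (u - v) = u + v → abs n n (u - w) = u + w →
    abs n n (u - abs n n (v + w)) = u + abs n n (v + w) ∧
      abs n n (u - abs n n (v - w)) = u + abs n n (v - w)
  abs_smul_le : ∀ (r m n s : ℕ) (α : Matrix (Fin r) (Fin m) ℂ)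
    (v : Matrix (Fin m) (Fin n) V) (β : Matrix (Fin n) (Fin s) ℂ),
    (cnorm α : ℂ) • abs n s (smulB (abs m n v) β) - abs r s (aSmul α (smulB v β)) ∈ pos s
  abs_dsum : ∀ (m n r s : ℕ) (v : Matrix (Fin m) (Fin n) V) (w : Matrix (Fin r) (Fin s) V),
    abs (m + r) (n + s) (dsum v w) = dsum (abs m n v) (abs r s w)

/-- A matrix order unit structure on top of an absolutely matrix ordered space:
an order unit `e` with `V⁺` proper and each `Mₙ(V)⁺` Archimedean. -/
structure AMOUS (V : Type*) [AddCommGroup V] [Module ℂ V] [StarAddMonoid V]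
    [StarModule ℂ V] extends AMOS V where
  e : V
  e_pos : diagE e 1 ∈ pos 1
  proper : ∀ v ∈ pos 1, -v ∈ pos 1 → v = 0
  arch : ∀ n (v : Matrix (Fin n) (Fin n) V), mstar v = v →
    (∀ k : ℝ, 0 < k → (k : ℂ) • diagE e n + v ∈ pos n) →
    v ∈ pos n
  unit : ∀ n (v : Matrix (Fin n) (Fin n) V), mstar v = v →
    ∃ k : ℝ, 0 < k ∧ (k : ℂ) • diagE e n - v ∈ pos n ∧
      (k : ℂ) • diagE e n + v ∈ pos n

namespace AMOUS

variable {V : Type*} [AddCommGroup V] [Module ℂ V] [StarAddMonoid V] [StarModule ℂ V]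
variable (A : AMOUS V)

/-- `eⁿ = e ⊕ ⋯ ⊕ e ∈ Mₙ(V)`. -/
def eN (n : ℕ) : Matrix (Fin n) (Fin n) V := diagE A.e n

/-- The `2n × 2n` matrix `[[a, b], [c, d]]` of `n × n` blocks. -/
def block2 {n : ℕ} (a b c d : Matrix (Fin n) (Fin n) V) :
    Matrix (Fin (n + n)) (Fin (n + n)) V :=
  fun i j =>
    if hi : (i : ℕ) < n then
      (if hj : (j : ℕ) < n then a ⟨i, hi⟩ ⟨j, hj⟩
       else b ⟨i, hi⟩ ⟨(j : ℕ) - n, by have := j.isLt; omega⟩)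
    else
      (if hj : (j : ℕ) < n then c ⟨(i : ℕ) - n, by have := i.isLt; omega⟩ ⟨j, hj⟩
       else d ⟨(i : ℕ) - n, by have := i.isLt; omega⟩ ⟨(j : ℕ) - n, by have := j.isLt; omega⟩)

end AMOUS
namespace AMOUS

variable {V : Type*} [AddCommGroup V] [Module ℂ V] [StarAddMonoid V] [StarModule ℂ V]
variable (A : AMOUS V)

/-- The matrix norms of a matrix order unit space:
`‖v‖ₙ = inf { k > 0 : [[k eⁿ, v], [v*, k eⁿ]] ∈ M₂ₙ(V)⁺ }`. -/
def mnorm (n : ℕ) (v : Matrix (Fin n) (Fin n) V) : ℝ :=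
  sInf {k : ℝ | 0 < k ∧
    block2 ((k : ℂ) • A.eN n) v (mstar v) ((k : ℂ) • A.eN n) ∈ A.pos (n + n)}

/-- Orthogonality `u ⊥ v` (for positive elements): `|u − v| = u + v`. -/
def Perp {n : ℕ} (u v : Matrix (Fin n) (Fin n) V) : Prop :=
  A.abs n n (u - v) = u + v

/-- `u ⊥_∞ v`: `‖k₁ u + k₂ v‖ = max {‖k₁ u‖, ‖k₂ v‖}` for all real `k₁, k₂`. -/
def PerpInfM {n : ℕ} (u v : Matrix (Fin n) (Fin n) V) : Prop :=
  ∀ k₁ k₂ : ℝ, A.mnorm n ((k₁ : ℂ) • u + (k₂ : ℂ) • v) =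
    max (A.mnorm n ((k₁ : ℂ) • u)) (A.mnorm n ((k₂ : ℂ) • v))

/-- `u ⊥_∞^a v`: absolute `∞`-orthogonality. -/
def PerpInfA {n : ℕ} (u v : Matrix (Fin n) (Fin n) V) : Prop :=
  ∀ u₁ ∈ A.pos n, ∀ v₁ ∈ A.pos n, u - u₁ ∈ A.pos n → v - v₁ ∈ A.pos n → A.PerpInfM u₁ v₁

/-- `(V, {Mₙ(V)⁺}, {|·|}, e)` is an absolute matrix order unit space:
`⊥ = ⊥_∞^a` on each `Mₙ(V)⁺`. -/
def IsAbsolute : Prop :=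
  ∀ n, ∀ u ∈ A.pos n, ∀ v ∈ A.pos n, (A.Perp u v ↔ A.PerpInfA u v)

/-- `p` is an order projection in `Mₙ(V)`: `p* = p` and `|2p − eⁿ| = eⁿ`. -/
def IsOP (n : ℕ) (p : Matrix (Fin n) (Fin n) V) : Prop :=
  mstar p = p ∧ A.abs n n ((2 : ℂ) • p - A.eN n) = A.eN n

/-- `v ∈ M_{m,n}(V)` is a partial isometry: `|v|` and `|v*|` are order projections. -/
def IsPI {m n : ℕ} (v : Matrix (Fin m) (Fin n) V) : Prop :=
  A.IsOP n (A.abs m n v) ∧ A.IsOP m (A.abs n m (mstar v))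

end AMOUS

/-- An element of `M_∞(V)`: a matrix at some level `n`. -/
def OPE (V : Type*) : Type _ := Σ n : ℕ, Matrix (Fin n) (Fin n) V

namespace OPE

variable {V : Type*} [AddCommGroup V] [Module ℂ V] [StarAddMonoid V] [StarModule ℂ V]

/-- Direct sum in `M_∞(V)`. -/
def d (p q : OPE V) : OPE V := ⟨p.1 + q.1, dsum p.2 q.2⟩

/-- The zero order projection (at level 1). -/
def zero (V : Type*) [AddCommGroup V] : OPE V := ⟨1, 0⟩

end OPE

namespace AMOUS

variable {V : Type*} [AddCommGroup V] [Module ℂ V] [StarAddMonoid V] [StarModule ℂ V]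
variable (A : AMOUS V)

/-- Membership in `𝒪𝒫_∞(V)`. -/
def IsOPE (p : OPE V) : Prop := A.IsOP p.1 p.2

/-- `eⁿ` as an element of `𝒪𝒫_∞(V)`. -/
def eOPE (n : ℕ) : OPE V := ⟨n, A.eN n⟩

/-- Partial isometric equivalence `p ∼ q` of order projections: there is a partial
isometry `v` with `p = |v*|` and `q = |v|`. -/
def Sim (p q : OPE V) : Prop :=
  ∃ v : Matrix (Fin p.1) (Fin q.1) V,
    A.IsPI v ∧ p.2 = A.abs q.1 p.1 (mstar v) ∧ q.2 = A.abs p.1 q.1 v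

/-- Condition (T). -/
def CondT : Prop :=
  ∀ (m n l : ℕ) (u : Matrix (Fin m) (Fin n) V) (v : Matrix (Fin l) (Fin n) V),
    A.IsPI u → A.IsPI v → A.abs m n u = A.abs l n v →
    ∃ w : Matrix (Fin m) (Fin l) V, A.IsPI w ∧
      A.abs l m (mstar w) = A.abs n m (mstar u) ∧ A.abs m l w = A.abs n l (mstar v)

/-- Stabilized equivalence `p ≈ q`: `p ⊕ r ∼ q ⊕ r` for some order projection `r`. -/
def ASim (p q : OPE V) : Prop := ∃ r : OPE V, A.IsOPE r ∧ A.Sim (p.d r) (q.d r)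

/-- A pair of order projections, representing an element `[(p,q)]` of `K₀(V)`. -/
def IsOPPair (x : OPE V × OPE V) : Prop := A.IsOPE x.1 ∧ A.IsOPE x.2

/-- The relation `(p₁,q₁) ≡ (p₂,q₂) ↔ p₁ ⊕ q₂ ≈ p₂ ⊕ q₁` defining `K₀(V)`. -/
def Krel (x y : OPE V × OPE V) : Prop := A.ASim (x.1.d y.2) (y.1.d x.2)

/-- Addition of representatives of `K₀(V)` classes. -/
def kadd (x y : OPE V × OPE V) : OPE V × OPE V := (x.1.d y.1, x.2.d y.2)

/-- The representative of the zero class of `K₀(V)`. -/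
def kzero : OPE V × OPE V := (OPE.zero V, OPE.zero V)

/-- Representative-level membership in the cone `K₀(V)⁺ = {[(p,0)] : p ∈ 𝒪𝒫_∞(V)}`. -/
def KPos (x : OPE V × OPE V) : Prop :=
  ∃ p : OPE V, A.IsOPE p ∧ A.Krel x (p, OPE.zero V)

/-- Representative-level order `[x] ≤ [y]` in `K₀(V)`: `[y] − [x] ∈ K₀(V)⁺`. -/
def Kle (x y : OPE V × OPE V) : Prop :=
  ∃ r : OPE V, A.IsOPE r ∧ A.Krel (kadd x (r, OPE.zero V)) y

/-- The order projection `p ∈ Mₙ(V)` is finite: `q ∼ p` and `q ≥ p` imply `q = p`. -/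
def FiniteOP (n : ℕ) (p : Matrix (Fin n) (Fin n) V) : Prop :=
  ∀ q : Matrix (Fin n) (Fin n) V, A.IsOP n q → A.Sim ⟨n, q⟩ ⟨n, p⟩ →
    q - p ∈ A.pos n → q = p

end AMOUS

/-! ### Maps between absolute matrix order unit spaces -/

section Maps

variable {V W : Type*} [AddCommGroup V] [Module ℂ V] [StarAddMonoid V] [StarModule ℂ V]
  [AddCommGroup W] [Module ℂ W] [StarAddMonoid W] [StarModule ℂ W]

/-- The amplification `φₙ` (entrywise application) of a map. -/
def mmap (φ : V →ₗ[ℂ] W) {m n : ℕ} (v : Matrix (Fin m) (Fin n) V) :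
    Matrix (Fin m) (Fin n) W :=
  fun i j => φ (v i j)

/-- `φ` is completely `|·|`-preserving: every amplification `φₙ` is `|·|`-preserving. -/
def CAbsPres (A : AMOUS V) (B : AMOUS W) (φ : V →ₗ[ℂ] W) : Prop :=
  ∀ (n : ℕ) (v : Matrix (Fin n) (Fin n) V), B.abs n n (mmap φ v) = mmap φ (A.abs n n v)

/-- `φ` and `ψ` are completely orthogonal: `φₙ(u) ⊥ ψₙ(v)` for all positive `u, v`. -/
def COrth (A : AMOUS V) (B : AMOUS W) (φ ψ : V →ₗ[ℂ] W) : Prop :=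
  ∀ (n : ℕ) (u v : Matrix (Fin n) (Fin n) V), u ∈ A.pos n → v ∈ A.pos n →
    B.Perp (mmap φ u) (mmap ψ v)

/-- The image of an element of `M_∞(V)` under (the amplifications of) `φ`. -/
def mmapOPE (φ : V →ₗ[ℂ] W) (p : OPE V) : OPE W := ⟨p.1, mmap φ p.2⟩

/-- `F` represents a group homomorphism `K₀(V) → K₀(W)` making the `K₀` diagram of `φ`
commute: it maps `K₀`-representatives to `K₀`-representatives, respects the defining
relation `≡`, is additive, and satisfies `F([(p, 0)]) = [(φ(p), 0)]`. -/
def K0HomProp (A : AMOUS V) (B : AMOUS W) (φ : V →ₗ[ℂ] W)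
    (F : OPE V × OPE V → OPE W × OPE W) : Prop :=
  (∀ x, A.IsOPPair x → B.IsOPPair (F x)) ∧
  (∀ x y, A.IsOPPair x → A.IsOPPair y → A.Krel x y → B.Krel (F x) (F y)) ∧
  (∀ x y, A.IsOPPair x → A.IsOPPair y → B.Krel (F (AMOUS.kadd x y)) (AMOUS.kadd (F x) (F y))) ∧
  (∀ p : OPE V, A.IsOPE p → B.Krel (F (p, OPE.zero V)) (mmapOPE φ p, OPE.zero W))

/-- The completely bounded norm of `φ` with respect to the order unit matrix norms. -/
def cbNorm (A : AMOUS V) (B : AMOUS W) (φ : V →ₗ[ℂ] W) : ℝ :=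
  ⨆ n : ℕ, sInf {c : ℝ | 0 ≤ c ∧
    ∀ v : Matrix (Fin n) (Fin n) V, B.mnorm n (mmap φ v) ≤ c * A.mnorm n v}

end Maps

/-!
Let `n = o(𝔳)`, choose `m ≥ n` with `𝔍ₘ𝔲𝔍ₘ = 𝔲`, and put `𝔮 = 𝔍ₘ - 𝔍ₙ`. Since `𝔳𝔮 = 0`,
`0 ≤ 𝔮𝔲𝔮 ≤ 𝔮𝔳𝔮 = 0`, so `𝔮𝔲𝔮 = 0` by properness. Conjugating `𝔲` by `√k 𝔍ₙ ± 𝔮/√k`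
gives `k 𝔍ₙ𝔲𝔍ₙ ± (𝔍ₙ𝔲𝔮 + 𝔮𝔲𝔍ₙ) ≥ 0` for all `k > 0`, so the off-diagonal part vanishes by
the Archimedean property and properness. Hence `𝔲 = 𝔍ₙ𝔲𝔍ₙ`.
-/

section FiniteMatrices

open Finset

lemma isFin_zero : IsFin 0 := ⟨0, fun _ _ _ => rfl⟩

lemma isFin_add {a b : FMat} (ha : IsFin a) (hb : IsFin b) : IsFin (a + b) := by
  obtain ⟨n, hn⟩ := ha
  obtain ⟨k, hk⟩ := hb
  exact ⟨max n k, fun i j h => by simp [hn i j (by omega), hk i j (by omega)]⟩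

lemma isFin_smul (c : ℂ) {a : FMat} (ha : IsFin a) : IsFin (c • a) := by
  obtain ⟨n, hn⟩ := ha
  exact ⟨n, fun i j h => by simp [hn i j h]⟩

lemma isFin_finsetDiag (s : Finset ℕ) : IsFin (finsetDiag s) := by
  refine ⟨s.sup id + 1, fun i j h => if_neg ?_⟩
  rintro ⟨rfl, hi⟩
  have := le_sup (f := id) hi
  simp only [id] at this
  omega

lemma JMat_eq_finsetDiag (n : ℕ) : JMat n = finsetDiag (range n) := by
  funext i j
  simp [JMat, finsetDiag]

lemma isFin_JMat (n : ℕ) : IsFin (JMat n) := by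
  rw [JMat_eq_finsetDiag]
  exact isFin_finsetDiag _

lemma finsetDiag_empty : finsetDiag ∅ = 0 := by
  funext i j
  simp [finsetDiag]

lemma finsetDiag_union {s t : Finset ℕ} (h : Disjoint s t) :
    finsetDiag (s ∪ t) = finsetDiag s + finsetDiag t := by
  funext i j
  rcases eq_or_ne i j with rfl | hij
  · by_cases hs : i ∈ s
    · simp [finsetDiag, hs, disjoint_left.mp h hs]
    · simp [finsetDiag, hs]
  · simp [finsetDiag, hij]

lemma fstar_finsetDiag (s : Finset ℕ) : fstar (finsetDiag s) = finsetDiag s := by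
  funext i j
  rcases eq_or_ne i j with rfl | hij
  · by_cases hs : i ∈ s <;> simp [fstar, finsetDiag, hs]
  · simp [fstar, finsetDiag, hij, Ne.symm hij]

lemma fstar_JMat (n : ℕ) : fstar (JMat n) = JMat n := by
  rw [JMat_eq_finsetDiag, fstar_finsetDiag]

lemma fstar_add (a b : FMat) : fstar (a + b) = fstar a + fstar b := by
  funext i j
  simp [fstar]

lemma fstar_ofReal_smul (c : ℝ) (a : FMat) : fstar ((c : ℂ) • a) = (c : ℂ) • fstar a := by
  funext i j
  simp [fstar]

lemma fmul_finsetDiag (s t : Finset ℕ) :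
    fmul (finsetDiag s) (finsetDiag t) = finsetDiag (s ∩ t) := by
  funext i k
  rw [fmul, tsum_eq_single i fun j hj => by simp [finsetDiag, Ne.symm hj]]
  rcases eq_or_ne i k with rfl | hik
  · by_cases hs : i ∈ s <;> by_cases ht : i ∈ t <;> simp [finsetDiag, hs, ht]
  · simp [finsetDiag, hik]

lemma fmul_JMat (k m : ℕ) : fmul (JMat k) (JMat m) = JMat (min k m) := by
  simp only [JMat_eq_finsetDiag, fmul_finsetDiag, range_inter_range]

lemma fmul_JMat_finsetDiag_Ico (n m : ℕ) : fmul (JMat n) (finsetDiag (Ico n m)) = 0 := by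
  rw [JMat_eq_finsetDiag, fmul_finsetDiag, range_eq_Ico,
    disjoint_iff_inter_eq_empty.mp (Ico_disjoint_Ico_consecutive 0 n m), finsetDiag_empty]

lemma fmul_finsetDiag_Ico_JMat (n m : ℕ) :
    fmul (finsetDiag (Ico n m)) (JMat m) = finsetDiag (Ico n m) := by
  rw [JMat_eq_finsetDiag, fmul_finsetDiag, inter_eq_left.mpr]
  intro i hi
  simp only [mem_Ico, mem_range] at hi ⊢
  exact hi.2

lemma JMat_add_finsetDiag_Ico {n m : ℕ} (h : n ≤ m) :
    JMat n + finsetDiag (Ico n m) = JMat m := by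
  rw [JMat_eq_finsetDiag, JMat_eq_finsetDiag, range_eq_Ico, range_eq_Ico,
    ← Ico_union_Ico_eq_Ico n.zero_le h, finsetDiag_union (Ico_disjoint_Ico_consecutive 0 n m)]

lemma fmul_smul_right (a : FMat) (c : ℂ) (b : FMat) : fmul a (c • b) = c • fmul a b := by
  funext i k
  simp only [fmul, Pi.smul_apply, smul_eq_mul, ← tsum_mul_left]
  exact tsum_congr fun j => by ring

end FiniteMatrices

namespace FBimod

variable {V : Type*} [AddCommGroup V] [Module ℂ V] (M : FBimod V)

lemma lsmul_zero (a : FMat) : M.lsmul a 0 = 0 :=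
  (AddMonoidHom.mk' (M.lsmul a) (M.lsmul_add a)).map_zero

lemma lsmul_neg (a : FMat) (v : V) : M.lsmul a (-v) = -M.lsmul a v :=
  (AddMonoidHom.mk' (M.lsmul a) (M.lsmul_add a)).map_neg v

lemma rsmul_sub (u v : V) (b : FMat) : M.rsmul (u - v) b = M.rsmul u b - M.rsmul v b :=
  (AddMonoidHom.mk' (M.rsmul · b) (M.rsmul_add · · b)).map_sub u v

lemma star_neg (v : V) : M.star (-v) = -M.star v :=
  (AddMonoidHom.mk' M.star M.star_add).map_neg v

lemma rsmul_zero_right (v : V) : M.rsmul v 0 = 0 := by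
  have h := M.rsmul_add' v 0 0 isFin_zero isFin_zero
  rwa [add_zero, left_eq_add] at h

lemma conj_sub (a : FMat) (u v : V) : M.conj a (u - v) = M.conj a u - M.conj a v := by
  rw [conj, rsmul_sub]
  exact (AddMonoidHom.mk' (M.lsmul _) (M.lsmul_add _)).map_sub _ _

lemma conj_JMat (n : ℕ) (v : V) : M.conj (JMat n) v = M.cut n v := by
  rw [conj, fstar_JMat, cut]

section Cut

variable {M}

lemma cut_cut (k m : ℕ) (u : V) : M.cut m (M.cut k u) = M.cut (min k m) u := by
  simp only [cut]
  rw [M.lsmul_rsmul _ _ _ (isFin_JMat k) (isFin_JMat m),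
    ← M.mul_lsmul _ _ _ (isFin_JMat m) (isFin_JMat k),
    ← M.rsmul_mul _ _ _ (isFin_JMat k) (isFin_JMat m), fmul_JMat, fmul_JMat, min_comm m]

lemma cut_of_le {k m : ℕ} {u : V} (h : M.cut k u = u) (hkm : k ≤ m) : M.cut m u = u := by
  rw [← h, cut_cut, min_eq_left hkm]

lemma lsmul_JMat_of_cut {m : ℕ} {u : V} (h : M.cut m u = u) : M.lsmul (JMat m) u = u := by
  conv_lhs => rw [← h]
  rw [cut, ← M.mul_lsmul _ _ _ (isFin_JMat m) (isFin_JMat m), fmul_JMat, min_self]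
  exact h

lemma cut_rsmul {m : ℕ} {u : V} (h : M.cut m u = u) {b : FMat} (hb : IsFin b)
    (hbJ : fmul b (JMat m) = b) : M.cut m (M.rsmul u b) = M.rsmul u b := by
  rw [cut, ← M.rsmul_mul _ _ _ hb (isFin_JMat m), hbJ,
    ← M.lsmul_rsmul _ _ _ (isFin_JMat m) hb, lsmul_JMat_of_cut h]

/-- Complex scalars commute with the left action only through `smul_compat`, which needs
`w` to have bounded order. -/
lemma lsmul_smul_of_cut {m : ℕ} (c : ℂ) {a : FMat} (ha : IsFin a)
    (haJ : fmul a (JMat m) = a) {w : V} (hw : M.cut m w = w) :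
    M.lsmul a (c • w) = c • M.lsmul a w := by
  rw [← M.smul_compat c m w hw, ← M.mul_lsmul _ _ _ ha (isFin_smul c (isFin_JMat m)),
    fmul_smul_right, haJ, M.smul_lsmul c a w ha]

lemma conj_eq_zero_of_cut {n : ℕ} {v : V} (h : M.cut n v = v) {b : FMat} (hb : IsFin b)
    (hJb : fmul (JMat n) b = 0) : M.conj b v = 0 := by
  rw [conj, ← h, cut, M.lsmul_rsmul _ _ _ (isFin_JMat n) hb,
    ← M.rsmul_mul _ _ _ (isFin_JMat n) hb, hJb, rsmul_zero_right, lsmul_zero, lsmul_zero]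

lemma conj_smul_add_smul {m : ℕ} {a b : FMat} (ha : IsFin a) (hb : IsFin b)
    (ha' : fstar a = a) (hb' : fstar b = b) (haJ : fmul a (JMat m) = a)
    (hbJ : fmul b (JMat m) = b) {u : V} (hu : M.cut m u = u) (c d : ℝ) :
    M.conj ((c : ℂ) • a + (d : ℂ) • b) u =
      ((c * c : ℝ) : ℂ) • M.conj a u +
        ((c * d : ℝ) : ℂ) • (M.lsmul a (M.rsmul u b) + M.lsmul b (M.rsmul u a)) +
        ((d * d : ℝ) : ℂ) • M.conj b u := by
  have hca := isFin_smul c ha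
  have hdb := isFin_smul d hb
  have hua := cut_rsmul hu ha haJ
  have hub := cut_rsmul hu hb hbJ
  simp only [conj, fstar_add, fstar_ofReal_smul, ha', hb']
  rw [M.rsmul_add' u _ _ hca hdb, M.smul_rsmul _ _ _ ha, M.smul_rsmul _ _ _ hb,
    M.add_lsmul _ _ _ hca hdb, M.smul_lsmul _ _ _ ha, M.smul_lsmul _ _ _ hb,
    M.lsmul_add a, M.lsmul_add b, lsmul_smul_of_cut _ ha haJ hua,
    lsmul_smul_of_cut _ ha haJ hub, lsmul_smul_of_cut _ hb hbJ hua,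
    lsmul_smul_of_cut _ hb hbJ hub]
  push_cast
  module

end Cut

section Cone

variable {M} {C : Set V}

lemma conj_eq_zero_of_le (hC : M.IsCone C) (hproper : ConeProper C) {u v : V} (hu : u ∈ C)
    (hle : v - u ∈ C) {a : FMat} (ha : IsFin a) (hv : M.conj a v = 0) : M.conj a u = 0 := by
  refine hproper _ (hC.2.2 u hu a ha) ?_
  simpa [conj_sub, hv] using hC.2.2 _ hle a ha

lemma eq_zero_of_forall_smul_add_mem (hproper : ConeProper C) (harch : M.ConeArch C)
    {p s : V} (hp : p ∈ C) (hs : M.star s = s)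
    (hmem : ∀ ε : ℝ, ε * ε = 1 → ∀ k : ℝ, 0 < k → (k : ℂ) • p + (ε : ℂ) • s ∈ C) : s = 0 := by
  refine hproper s (harch p hp s hs fun k hk => by simpa using hmem 1 (one_mul 1) k hk) ?_
  refine harch p hp (-s) (by rw [M.star_neg, hs]) fun k hk => ?_
  simpa [← sub_eq_add_neg] using hmem (-1) (by norm_num) k hk

/-- Conjugating by `√k 𝔞 ± 𝔟/√k` shows `k 𝔞𝔲𝔞 ± (𝔞𝔲𝔟 + 𝔟𝔲𝔞) ≥ 0` for every `k > 0`. -/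
lemma offDiag_eq_zero_of_conj_eq_zero (hC : M.IsCone C) (hproper : ConeProper C)
    (harch : M.ConeArch C) {m : ℕ} {a b : FMat} (ha : IsFin a) (hb : IsFin b)
    (ha' : fstar a = a) (hb' : fstar b = b) (haJ : fmul a (JMat m) = a)
    (hbJ : fmul b (JMat m) = b) {u : V} (hu : u ∈ C) (hum : M.cut m u = u)
    (hbu : M.conj b u = 0) : M.lsmul a (M.rsmul u b) + M.lsmul b (M.rsmul u a) = 0 := by
  have hstar : M.star (M.lsmul a (M.rsmul u b)) = M.lsmul b (M.rsmul u a) := by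
    rw [M.star_lsmul _ _ ha, M.star_rsmul _ _ hb, hC.1 u hu, ha', hb',
      M.lsmul_rsmul _ _ _ hb ha]
  have hstar' : M.star (M.lsmul b (M.rsmul u a)) = M.lsmul a (M.rsmul u b) := by
    rw [← hstar, M.star_star]
  refine eq_zero_of_forall_smul_add_mem hproper harch (p := M.conj a u)
    (by simpa [conj, ha'] using hC.2.2 u hu a ha) (by rw [M.star_add, hstar, hstar', add_comm])
    fun ε _ k hk => ?_
  have hsqrt : Real.sqrt k ≠ 0 := (Real.sqrt_pos.mpr hk).ne'
  have key := hC.2.2 u hu _ (isFin_add (isFin_smul (Real.sqrt k) ha)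
    (isFin_smul ((ε / Real.sqrt k : ℝ) : ℂ) hb))
  rwa [conj_smul_add_smul ha hb ha' hb' haJ hbJ hum, hbu, smul_zero, add_zero,
    Real.mul_self_sqrt hk.le, mul_div_cancel₀ _ hsqrt] at key

end Cone

end FBimod

theorem statement0_general {V : Type*} [AddCommGroup V] [Module ℂ V] (M : FBimod V) (C : Set V)
    (hC : M.IsCone C) (hproper : FBimod.ConeProper C) (harch : M.ConeArch C)
    (u v : V) (hu : u ∈ C) (hle : v - u ∈ C) :
    M.ord u ≤ M.ord v := by
  set n := M.ord v
  have hvn : M.cut n v = v := Nat.sInf_mem (M.nondeg v)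
  obtain ⟨m, hnm, hum⟩ : ∃ m, n ≤ m ∧ M.cut m u = u :=
    let ⟨m₀, hm₀⟩ := M.nondeg u
    ⟨max n m₀, le_max_left n m₀, FBimod.cut_of_le hm₀ (le_max_right n m₀)⟩
  have hJ : fmul (JMat n) (JMat m) = JMat n := by rw [fmul_JMat, min_eq_left hnm]
  have hqu : M.conj (finsetDiag (Finset.Ico n m)) u = 0 :=
    FBimod.conj_eq_zero_of_le hC hproper hu hle (isFin_finsetDiag _)
      (FBimod.conj_eq_zero_of_cut hvn (isFin_finsetDiag _) (fmul_JMat_finsetDiag_Ico n m))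
  have hoff := FBimod.offDiag_eq_zero_of_conj_eq_zero hC hproper harch (isFin_JMat n)
    (isFin_finsetDiag _) (fstar_JMat n) (fstar_finsetDiag _) hJ
    (fmul_finsetDiag_Ico_JMat n m) hu hum hqu
  have hsplit := FBimod.conj_smul_add_smul (isFin_JMat n) (isFin_finsetDiag _) (fstar_JMat n)
    (fstar_finsetDiag _) hJ (fmul_finsetDiag_Ico_JMat n m) hum 1 1
  simp only [mul_one, Complex.ofReal_one, one_smul, JMat_add_finsetDiag_Ico hnm,
    FBimod.conj_JMat, hum, hoff, hqu, add_zero] at hsplit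
  exact Nat.sInf_le hsplit.symm

/-- In a non-degenerate ordered `𝔉`-bimodule `(𝔙, 𝔙⁺)` with `𝔙⁺`
proper and Archimedean, `𝔲, 𝔳 ∈ 𝔙⁺` and `𝔲 ≤ 𝔳` imply `o(𝔲) ≤ o(𝔳)`. -/
theorem statement0 {V : Type*} [AddCommGroup V] [Module ℂ V] (M : FBimod V) (C : Set V)
    (hC : M.IsCone C) (hproper : FBimod.ConeProper C) (harch : M.ConeArch C)
    (u v : V) (hu : u ∈ C) (hv : v ∈ C) (hle : v - u ∈ C) :
    M.ord u ≤ M.ord v :=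
  statement0_general M C hC hproper harch u v hu hle
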